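/- Let K be a positive integer and let (μ, Ω, Λ) and (μ̃, Ω̃, Λ̃) be MSN parameters: μ, μ̃, Λ, Λ̃ ∈ ℝ^K and Ω, Ω̃ K×K positive definite, with Δ = Ω^{1/2}·Λ/√(1+ΛᵀΛ), Γ = Ω − ΔΔᵀ, and analogously Δ̃, Γ̃. Let CF and C̃F denote the corresponding MSN characteristic functions CF(t) = exp(i·tᵀμ − ½·tᵀΩt)·(1 + i·ℑ(Δᵀt)) and C̃F(t) = exp(i·tᵀμ̃ − ½·tᵀΩ̃t)·(1 + i·ℑ(Δ̃ᵀt)). For every t ∈ ℝ^K with tᵀ(Γ − Γ̃)t ≠ 0, either lim_{c→∞} CF(ct)/C̃F(ct) = 0 or lim_{c→∞} |CF(ct)/C̃F(ct)| = ∞. -/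

import Mathlib

open Filter Matrix

noncomputable section

/-- ℑ(x) = ∫₀ˣ √(2/π)·exp(u²/2) du. -/
def ImInt (x : ℝ) : ℝ := ∫ u in (0:ℝ)..x, Real.sqrt (2 / Real.pi) * Real.exp (u ^ 2 / 2)

/-- The square root of a positive semidefinite matrix, as defined in the older Mathlib
(`Matrix.PosSemidef.sqrt`, removed since). -/
def Matrix.PosSemidef.sqrt {n : Type*} [Fintype n] [DecidableEq n] {A : Matrix n n ℝ}
    (hA : A.PosSemidef) : Matrix n n ℝ :=
  (hA.1.eigenvectorUnitary : Matrix n n ℝ) * diagonal (Real.sqrt ∘ hA.1.eigenvalues) *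
    (star hA.1.eigenvectorUnitary : Matrix n n ℝ)

/-- The Δ parameter of MSN(μ, Ω, Λ): Δ = Ω^{1/2}·Λ/√(1+ΛᵀΛ). -/
def msnDelta {K : ℕ} (Ω : Matrix (Fin K) (Fin K) ℝ) (hΩ : Ω.PosDef)
    (Λ : Fin K → ℝ) : Fin K → ℝ :=
  (Real.sqrt (1 + Λ ⬝ᵥ Λ))⁻¹ • hΩ.posSemidef.sqrt.mulVec Λ

/-- The Γ parameter of MSN(μ, Ω, Λ): Γ = Ω − ΔΔᵀ. -/
def msnGamma {K : ℕ} (Ω : Matrix (Fin K) (Fin K) ℝ) (hΩ : Ω.PosDef)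
    (Λ : Fin K → ℝ) : Matrix (Fin K) (Fin K) ℝ :=
  Ω - vecMulVec (msnDelta Ω hΩ Λ) (msnDelta Ω hΩ Λ)

/-- The MSN characteristic function. -/
def msnCF {K : ℕ} (μ : Fin K → ℝ) (Ω : Matrix (Fin K) (Fin K) ℝ) (hΩ : Ω.PosDef)
    (Λ : Fin K → ℝ) (t : Fin K → ℝ) : ℂ :=
  Complex.exp (Complex.I * ((t ⬝ᵥ μ : ℝ) : ℂ) - ((t ⬝ᵥ Ω.mulVec t / 2 : ℝ) : ℂ)) *
    (1 + Complex.I * ((ImInt (msnDelta Ω hΩ Λ ⬝ᵥ t) : ℝ) : ℂ))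

/-!
Write `‖msnCF μ Ω hΩ Λ (c • t)‖ = exp (-c² tᵀΓt / 2) · skewFactor (c Δᵀt)`, where
`skewFactor y = exp (-y² / 2) ‖1 + iℑ(y)‖`. For `|y| ≥ 1` the integral `ℑ(|y|)` lies between
`√(2/π) exp ((|y| - 1)² / 2)` and `√(2/π) |y| exp (y² / 2)`, so `skewFactor y` is squeezed between
`√(2/π) exp (-|y|)` and `exp |y|`. Hence `‖CF(ct) / C̃F(ct)‖ = exp (-c² tᵀ(Γ - Γ̃)t / 2 + O(c))`,
and the sign of the quadratic term decides the limit.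
-/

open Real

section ImInt

lemma continuous_imInt_integrand : Continuous fun u : ℝ => √(2 / π) * exp (u ^ 2 / 2) := by
  fun_prop

lemma imInt_neg (x : ℝ) : ImInt (-x) = -ImInt x := by
  have h := intervalIntegral.integral_comp_neg (a := 0) (b := x)
    (fun u : ℝ => √(2 / π) * exp (u ^ 2 / 2))
  simp only [neg_sq, neg_zero] at h
  rw [ImInt, ImInt, intervalIntegral.integral_symm, ← h]

lemma imInt_nonneg {x : ℝ} (hx : 0 ≤ x) : 0 ≤ ImInt x :=
  intervalIntegral.integral_nonneg hx fun _ _ => by positivity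

lemma abs_imInt (x : ℝ) : |ImInt x| = ImInt |x| := by
  rcases le_total 0 x with hx | hx
  · rw [abs_of_nonneg hx, abs_of_nonneg (imInt_nonneg hx)]
  · rw [abs_of_nonpos hx, ← abs_neg, ← imInt_neg, abs_of_nonneg (imInt_nonneg (neg_nonneg.2 hx))]

lemma imInt_le {x : ℝ} (hx : 0 ≤ x) : ImInt x ≤ √(2 / π) * x * exp (x ^ 2 / 2) := by
  calc ImInt x ≤ ∫ _ in (0 : ℝ)..x, √(2 / π) * exp (x ^ 2 / 2) :=
        intervalIntegral.integral_mono_on hx (continuous_imInt_integrand.intervalIntegrable _ _)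
          intervalIntegrable_const fun u hu => by gcongr <;> linarith [hu.1, hu.2]
    _ = √(2 / π) * x * exp (x ^ 2 / 2) := by
        rw [intervalIntegral.integral_const, smul_eq_mul]; ring

lemma le_imInt {x : ℝ} (hx : 1 ≤ x) : √(2 / π) * exp ((x - 1) ^ 2 / 2) ≤ ImInt x := by
  have hi := continuous_imInt_integrand.intervalIntegrable (μ := MeasureTheory.volume)
  calc √(2 / π) * exp ((x - 1) ^ 2 / 2) = ∫ _ in (x - 1)..x, √(2 / π) * exp ((x - 1) ^ 2 / 2) := by
        rw [intervalIntegral.integral_const, smul_eq_mul]; ring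
    _ ≤ ∫ u in (x - 1)..x, √(2 / π) * exp (u ^ 2 / 2) :=
        intervalIntegral.integral_mono_on (by linarith) intervalIntegrable_const (hi _ _)
          fun u hu => by gcongr; linarith [hu.1]
    _ ≤ ImInt x := by
        rw [ImInt, ← intervalIntegral.integral_add_adjacent_intervals (hi 0 (x - 1)) (hi _ _)]
        exact le_add_of_nonneg_left (imInt_nonneg (by linarith))

end ImInt

section SkewFactor

open Complex

lemma sqrt_two_div_pi_le_one : √(2 / π) ≤ 1 := by
  rw [Real.sqrt_le_one, div_le_one Real.pi_pos]
  linarith [Real.pi_gt_three]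

lemma one_le_norm_one_add_I_mul (x : ℝ) : 1 ≤ ‖1 + I * x‖ := by
  simpa using Complex.abs_re_le_norm (1 + I * x)

lemma abs_le_norm_one_add_I_mul (x : ℝ) : |x| ≤ ‖1 + I * x‖ := by
  simpa using Complex.abs_im_le_norm (1 + I * x)

lemma norm_one_add_I_mul_le (x : ℝ) : ‖1 + I * x‖ ≤ 1 + |x| := by
  simpa using norm_add_le (1 : ℂ) (I * x)

def skewFactor (y : ℝ) : ℝ := Real.exp (-(y ^ 2 / 2)) * ‖1 + I * (ImInt y : ℂ)‖

lemma skewFactor_pos (y : ℝ) : 0 < skewFactor y :=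
  mul_pos (Real.exp_pos _) (one_pos.trans_le (one_le_norm_one_add_I_mul _))

lemma skewFactor_le_exp_abs (y : ℝ) : skewFactor y ≤ Real.exp |y| := by
  have hy : 0 ≤ |y| := abs_nonneg y
  have hI : ‖1 + I * (ImInt y : ℂ)‖ ≤ Real.exp |y| * Real.exp (y ^ 2 / 2) :=
    calc ‖1 + I * (ImInt y : ℂ)‖ ≤ 1 + ImInt |y| := abs_imInt y ▸ norm_one_add_I_mul_le _
      _ ≤ 1 + √(2 / π) * |y| * Real.exp (|y| ^ 2 / 2) := by gcongr; exact imInt_le hy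
      _ ≤ (1 + |y|) * Real.exp (y ^ 2 / 2) := by
        rw [sq_abs]
        nlinarith [mul_le_mul_of_nonneg_right sqrt_two_div_pi_le_one
          (mul_nonneg hy (Real.exp_pos (y ^ 2 / 2)).le),
          Real.one_le_exp (by positivity : 0 ≤ y ^ 2 / 2)]
      _ ≤ Real.exp |y| * Real.exp (y ^ 2 / 2) := by
        gcongr; linarith [Real.add_one_le_exp |y|]
  calc skewFactor y ≤ Real.exp (-(y ^ 2 / 2)) * (Real.exp |y| * Real.exp (y ^ 2 / 2)) :=
        mul_le_mul_of_nonneg_left hI (Real.exp_pos _).le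
    _ = Real.exp |y| := by
        rw [mul_left_comm, ← Real.exp_add, neg_add_cancel, Real.exp_zero, mul_one]

lemma sqrt_two_div_pi_mul_exp_neg_abs_le_skewFactor (y : ℝ) :
    √(2 / π) * Real.exp (-|y|) ≤ skewFactor y := by
  suffices h : √(2 / π) * Real.exp (y ^ 2 / 2 - |y|) ≤ ‖1 + I * (ImInt y : ℂ)‖ by
    calc √(2 / π) * Real.exp (-|y|)
          = Real.exp (-(y ^ 2 / 2)) * (√(2 / π) * Real.exp (y ^ 2 / 2 - |y|)) := by
          rw [mul_left_comm, ← Real.exp_add]; ring_nf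
      _ ≤ skewFactor y := mul_le_mul_of_nonneg_left h (Real.exp_pos _).le
  rcases le_total |y| 1 with hy | hy
  · calc √(2 / π) * Real.exp (y ^ 2 / 2 - |y|) ≤ 1 * 1 := by
          gcongr
          · exact sqrt_two_div_pi_le_one
          · rw [Real.exp_le_one_iff, ← sq_abs]; nlinarith [abs_nonneg y]
      _ ≤ _ := (one_mul 1).trans_le (one_le_norm_one_add_I_mul _)
  · calc √(2 / π) * Real.exp (y ^ 2 / 2 - |y|) ≤ √(2 / π) * Real.exp ((|y| - 1) ^ 2 / 2) := by
          gcongr; rw [← sq_abs y]; nlinarith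
      _ ≤ ImInt |y| := le_imInt hy
      _ ≤ _ := abs_imInt y ▸ abs_le_norm_one_add_I_mul _

end SkewFactor

section MSN

variable {K : ℕ} (Ω : Matrix (Fin K) (Fin K) ℝ) (hΩ : Ω.PosDef) (Λ : Fin K → ℝ)

lemma dotProduct_msnGamma_mulVec (t : Fin K → ℝ) :
    t ⬝ᵥ msnGamma Ω hΩ Λ *ᵥ t = t ⬝ᵥ Ω *ᵥ t - (msnDelta Ω hΩ Λ ⬝ᵥ t) ^ 2 := by
  rw [msnGamma, sub_mulVec, dotProduct_sub, vecMulVec_mulVec, op_smul_eq_smul, dotProduct_smul,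
    smul_eq_mul, dotProduct_comm t (msnDelta Ω hΩ Λ), sq]

lemma norm_msnCF_smul (μ t : Fin K → ℝ) (c : ℝ) :
    ‖msnCF μ Ω hΩ Λ (c • t)‖ = Real.exp (-(c ^ 2 * (t ⬝ᵥ msnGamma Ω hΩ Λ *ᵥ t) / 2)) *
      skewFactor (c * (msnDelta Ω hΩ Λ ⬝ᵥ t)) := by
  rw [msnCF, skewFactor, norm_mul, Complex.norm_exp, ← mul_assoc, ← Real.exp_add,
    dotProduct_msnGamma_mulVec, dotProduct_smul, smul_eq_mul]
  congr 2
  simp only [Complex.sub_re, Complex.mul_re, Complex.I_re, Complex.I_im, Complex.ofReal_re,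
    Complex.ofReal_im, mulVec_smul, dotProduct_smul, smul_dotProduct, smul_eq_mul]
  ring

end MSN

lemma skewFactor_div_mem_Icc (x y : ℝ) :
    skewFactor x / skewFactor y ∈
      Set.Icc (√(2 / π) * Real.exp (-(|x| + |y|))) (Real.exp (|x| + |y|) / √(2 / π)) := by
  constructor
  · calc √(2 / π) * Real.exp (-(|x| + |y|))
          = √(2 / π) * Real.exp (-|x|) / Real.exp |y| := by
          rw [neg_add, Real.exp_add, Real.exp_neg |y|, ← div_eq_mul_inv, mul_div_assoc]
      _ ≤ skewFactor x / skewFactor y :=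
          div_le_div₀ (skewFactor_pos x).le (sqrt_two_div_pi_mul_exp_neg_abs_le_skewFactor x)
            (skewFactor_pos y) (skewFactor_le_exp_abs y)
  · calc skewFactor x / skewFactor y ≤ Real.exp |x| / (√(2 / π) * Real.exp (-|y|)) :=
          div_le_div₀ (Real.exp_pos _).le (skewFactor_le_exp_abs x) (by positivity)
            (sqrt_two_div_pi_mul_exp_neg_abs_le_skewFactor y)
      _ = Real.exp (|x| + |y|) / √(2 / π) := by
          rw [Real.exp_add, Real.exp_neg, div_mul_eq_div_div, div_inv_eq_mul, div_mul_eq_mul_div]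

lemma norm_msnCF_div_msnCF_smul_mem_Icc {K : ℕ} (μ Λ μ' Λ' : Fin K → ℝ)
    (Ω Ω' : Matrix (Fin K) (Fin K) ℝ) (hΩ : Ω.PosDef) (hΩ' : Ω'.PosDef) (t : Fin K → ℝ)
    {c : ℝ} (hc : 0 ≤ c) :
    ‖msnCF μ Ω hΩ Λ (c • t) / msnCF μ' Ω' hΩ' Λ' (c • t)‖ ∈
      Set.Icc
        (√(2 / π) * Real.exp (-(t ⬝ᵥ (msnGamma Ω hΩ Λ - msnGamma Ω' hΩ' Λ') *ᵥ t / 2 * c ^ 2 +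
          (|msnDelta Ω hΩ Λ ⬝ᵥ t| + |msnDelta Ω' hΩ' Λ' ⬝ᵥ t|) * c)))
        (Real.exp (-(t ⬝ᵥ (msnGamma Ω hΩ Λ - msnGamma Ω' hΩ' Λ') *ᵥ t / 2 * c ^ 2 -
          (|msnDelta Ω hΩ Λ ⬝ᵥ t| + |msnDelta Ω' hΩ' Λ' ⬝ᵥ t|) * c)) / √(2 / π)) := by
  set q := t ⬝ᵥ (msnGamma Ω hΩ Λ - msnGamma Ω' hΩ' Λ') *ᵥ t
  set D := msnDelta Ω hΩ Λ ⬝ᵥ t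
  set D' := msnDelta Ω' hΩ' Λ' ⬝ᵥ t
  have hratio : ‖msnCF μ Ω hΩ Λ (c • t) / msnCF μ' Ω' hΩ' Λ' (c • t)‖ =
      Real.exp (-(q / 2 * c ^ 2)) * (skewFactor (c * D) / skewFactor (c * D')) := by
    rw [norm_div, norm_msnCF_smul, norm_msnCF_smul, mul_div_mul_comm, ← Real.exp_sub]
    simp only [q, sub_mulVec, dotProduct_sub]
    congr 3
    ring
  obtain ⟨hlow, hup⟩ := skewFactor_div_mem_Icc (c * D) (c * D')
  rw [abs_mul, abs_mul, abs_of_nonneg hc, ← mul_add] at hlow hup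
  rw [hratio]
  constructor
  · calc _ = Real.exp (-(q / 2 * c ^ 2)) * (√(2 / π) * Real.exp (-(c * (|D| + |D'|)))) := by
          rw [mul_left_comm, ← Real.exp_add]; ring_nf
      _ ≤ _ := mul_le_mul_of_nonneg_left hlow (Real.exp_pos _).le
  · calc _ ≤ Real.exp (-(q / 2 * c ^ 2)) * (Real.exp (c * (|D| + |D'|)) / √(2 / π)) :=
          mul_le_mul_of_nonneg_left hup (Real.exp_pos _).le
      _ = _ := by rw [mul_div_assoc', ← Real.exp_add]; ring_nf

lemma tendsto_mul_sq_add_mul_atTop {a : ℝ} (ha : 0 < a) (b : ℝ) :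
    Tendsto (fun c : ℝ => a * c ^ 2 + b * c) atTop atTop :=
  (tendsto_id.atTop_mul_atTop₀
      ((tendsto_id.const_mul_atTop ha).atTop_add (tendsto_const_nhds (x := b)))).congr
    fun c => by simp only [id]; ring

theorem stmt13_general (K : ℕ)
    (μ Λ μ' Λ' : Fin K → ℝ) (Ω Ω' : Matrix (Fin K) (Fin K) ℝ)
    (hΩ : Ω.PosDef) (hΩ' : Ω'.PosDef) :
    ∀ t : Fin K → ℝ, t ⬝ᵥ (msnGamma Ω hΩ Λ - msnGamma Ω' hΩ' Λ').mulVec t ≠ 0 →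
      Tendsto (fun c : ℝ => msnCF μ Ω hΩ Λ (c • t) / msnCF μ' Ω' hΩ' Λ' (c • t))
        atTop (nhds 0) ∨
      Tendsto (fun c : ℝ =>
          ‖msnCF μ Ω hΩ Λ (c • t) / msnCF μ' Ω' hΩ' Λ' (c • t)‖)
        atTop atTop := by
  intro t hq
  have hbounds := (eventually_ge_atTop 0).mono fun c (hc : 0 ≤ c) =>
    norm_msnCF_div_msnCF_smul_mem_Icc μ Λ μ' Λ' Ω Ω' hΩ hΩ' t hc
  set q := t ⬝ᵥ (msnGamma Ω hΩ Λ - msnGamma Ω' hΩ' Λ') *ᵥ t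
  set β := |msnDelta Ω hΩ Λ ⬝ᵥ t| + |msnDelta Ω' hΩ' Λ' ⬝ᵥ t|
  rcases hq.lt_or_gt with hq | hq
  · right
    have hpoly := tendsto_mul_sq_add_mul_atTop (a := -(q / 2)) (by linarith) (-β)
    refine tendsto_atTop_mono' _ (hbounds.mono fun _ h => h.1) ?_
    refine (Real.tendsto_exp_atTop.comp (hpoly.congr fun c => ?_)).const_mul_atTop (by positivity)
    ring
  · left
    have hpoly := tendsto_mul_sq_add_mul_atTop (half_pos hq) (-β)
    rw [tendsto_zero_iff_norm_tendsto_zero]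
    refine squeeze_zero' (.of_forall fun _ => norm_nonneg _) (hbounds.mono fun _ h => h.2) ?_
    simpa [sub_eq_add_neg] using (Real.tendsto_exp_neg_atTop_nhds_zero.comp hpoly).div_const _

theorem stmt13 (K : ℕ) (hK : 0 < K)
    (μ Λ μ' Λ' : Fin K → ℝ) (Ω Ω' : Matrix (Fin K) (Fin K) ℝ)
    (hΩ : Ω.PosDef) (hΩ' : Ω'.PosDef) :
    ∀ t : Fin K → ℝ, t ⬝ᵥ (msnGamma Ω hΩ Λ - msnGamma Ω' hΩ' Λ').mulVec t ≠ 0 →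
      Tendsto (fun c : ℝ => msnCF μ Ω hΩ Λ (c • t) / msnCF μ' Ω' hΩ' Λ' (c • t))
        atTop (nhds 0) ∨
      Tendsto (fun c : ℝ =>
          ‖msnCF μ Ω hΩ Λ (c • t) / msnCF μ' Ω' hΩ' Λ' (c • t)‖)
        atTop atTop :=
  stmt13_general K μ Λ μ' Λ' Ω Ω' hΩ hΩ'
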